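/- The periodic discrete Hilbert transform ℍ_per u = c * u (circular convolution with the kernel c) is skew-symmetric and satisfies ‖ℍ_per u‖ ≤ ‖u‖ for all N-periodic grid functions u, with equality ‖ℍ_per u‖ = ‖u‖ whenever Σ_{j=0}^{N−1} u_j = 0. -/

import Mathlib

/-!
For odd `N = 2M + 1` the kernel is a discrete sine series,
`c_k = (2/N) ∑_{n=1}^{M} sin (2π n k / N)`: telescoping `2 sin θ ∑ sin (2nθ)` gives
`(cos θ - (-1)^k) / (2 sin θ)` with `θ = π k / N`, which is the cotangent or the tangent
branch of `c_k` according to the parity of `k`. Orthogonality of the discrete sines then gives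
`∑_j c_{j-k} c_{j-l} = δ_{kl} - 1/N`, i.e. `ℍᵀℍ = I - P` with `P` the orthogonal projection
onto constants, so `‖ℍ u‖² = ‖u‖² - (∑ u_j)² / N`. Skew-symmetry is the oddness of `c`.
-/

/-- The kernel of the periodic discrete Hilbert transform, extended N-periodically,
with value 0 at multiples of N. -/
noncomputable def cker (N : ℕ) (n : ℤ) : ℝ :=
  if (N : ℤ) ∣ n then 0
  else (1 - (-1 : ℝ) ^ n) / (2 * N)
         * (Real.cos (Real.pi * n / (2 * N)) / Real.sin (Real.pi * n / (2 * N)))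
       - (1 + (-1 : ℝ) ^ n) / (2 * N) * Real.tan (Real.pi * n / (2 * N))

/-- Periodic discrete Hilbert transform: circular convolution with `cker`. -/
noncomputable def Hper (N : ℕ) (u : ℤ → ℝ) (j : ℤ) : ℝ :=
  ∑ k ∈ Finset.range N, cker N (j - k) * u k

open Real Finset

theorem IsPrimitiveRoot.geom_sum_zpow {K : Type*} [Field K] {ζ : K} {N : ℕ}
    (hζ : IsPrimitiveRoot ζ N) (p : ℤ) :
    ∑ j ∈ range N, (ζ ^ p) ^ j = if (N : ℤ) ∣ p then (N : K) else 0 := by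
  split_ifs with hp
  · simp [(hζ.zpow_eq_one_iff_dvd p).2 hp]
  · rw [geom_sum_eq (mt (hζ.zpow_eq_one_iff_dvd p).1 hp), ← zpow_natCast, ← zpow_mul,
      mul_comm, zpow_mul, zpow_natCast, hζ.pow_eq_one, one_zpow, sub_self, zero_div]

theorem sum_cos_two_pi_mul_add {N : ℕ} (hN : N ≠ 0) (p : ℤ) (φ : ℝ) :
    ∑ j ∈ range N, cos (2 * π * p * j / N + φ) = (if (N : ℤ) ∣ p then (N : ℝ) else 0) * cos φ := by
  have hterm : ∀ j : ℕ, Complex.exp ((2 * π * p * j / N + φ : ℝ) * Complex.I)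
      = (Complex.exp (2 * π * Complex.I / N) ^ p) ^ j * Complex.exp (φ * Complex.I) := by
    intro j
    rw [← zpow_natCast, ← zpow_mul, ← Complex.exp_int_mul, ← Complex.exp_add]
    push_cast
    ring_nf
  calc ∑ j ∈ range N, cos (2 * π * p * j / N + φ)
      = (∑ j ∈ range N, (Complex.exp (2 * π * Complex.I / N) ^ p) ^ j
          * Complex.exp (φ * Complex.I)).re := by
        simp only [← hterm, Complex.re_sum, Complex.exp_ofReal_mul_I_re]
    _ = _ := by
        rw [← sum_mul, (Complex.isPrimitiveRoot_exp N hN).geom_sum_zpow p]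
        split_ifs <;> simp [Complex.exp_ofReal_mul_I_re]

theorem sum_sin_mul_sin {N : ℕ} (hN : N ≠ 0) (p q : ℤ) (x y : ℝ) :
    ∑ j ∈ range N, sin (2 * π * p * j / N + x) * sin (2 * π * q * j / N + y)
      = N / 2 * ((if (N : ℤ) ∣ p - q then cos (x - y) else 0)
          - (if (N : ℤ) ∣ p + q then cos (x + y) else 0)) := by
  have hterm : ∀ j : ℕ, sin (2 * π * p * j / N + x) * sin (2 * π * q * j / N + y)
      = (cos (2 * π * (p - q : ℤ) * j / N + (x - y))
          - cos (2 * π * (p + q : ℤ) * j / N + (x + y))) / 2 := by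
    intro j
    rw [eq_div_iff two_ne_zero, mul_comm, ← mul_assoc, two_mul_sin_mul_sin]
    push_cast
    ring_nf
  rw [sum_congr rfl fun j _ => hterm j, ← sum_div, sum_sub_distrib,
    sum_cos_two_pi_mul_add hN, sum_cos_two_pi_mul_add hN]
  split_ifs <;> ring

theorem two_mul_sin_mul_sum_sin (θ : ℝ) (M : ℕ) :
    2 * sin θ * ∑ n ∈ range M, sin (2 * (n + 1) * θ) = cos θ - cos ((2 * M + 1) * θ) := by
  induction M with
  | zero => simp
  | succ M ih =>
    rw [sum_range_succ, mul_add, ih, two_mul_sin_mul_sin,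
      show θ - 2 * ((M : ℝ) + 1) * θ = -((2 * M + 1) * θ) by ring, cos_neg]
    push_cast
    ring_nf

theorem two_mul_sin_mul_sum_cos (θ : ℝ) (M : ℕ) :
    2 * sin θ * ∑ n ∈ range M, cos (2 * (n + 1) * θ) = sin ((2 * M + 1) * θ) - sin θ := by
  induction M with
  | zero => simp
  | succ M ih =>
    rw [sum_range_succ, mul_add, ih, two_mul_sin_mul_cos,
      show θ - 2 * ((M : ℝ) + 1) * θ = -((2 * M + 1) * θ) by ring, sin_neg]
    push_cast
    ring_nf

theorem sin_pi_mul_div_ne_zero {N : ℕ} (hN : N ≠ 0) {k : ℤ} (hk : ¬ (N : ℤ) ∣ k) :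
    sin (π * k / N) ≠ 0 := by
  rw [Ne, sin_eq_zero_iff]
  rintro ⟨n, hn⟩
  refine hk ⟨n, ?_⟩
  field_simp at hn
  exact_mod_cast (by linear_combination -hn : (k : ℝ) = N * n)

theorem Int.natCast_dvd_sub_iff_eq {N a b : ℕ} (ha : a < N) (hb : b < N) :
    (N : ℤ) ∣ (b : ℤ) - a ↔ a = b :=
  ⟨fun h => (Nat.modEq_iff_dvd.2 h).eq_of_lt_of_lt ha hb, by rintro rfl; simp⟩

noncomputable def sineKernel (N : ℕ) (k : ℤ) : ℝ :=
  2 / N * ∑ n ∈ range ((N - 1) / 2), sin (2 * π * (n + 1) * k / N)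

theorem sum_cos_two_pi_mul_succ_div_odd {N M : ℕ} (hM : 2 * M + 1 = N) (m : ℤ) :
    ∑ n ∈ range M, cos (2 * π * (n + 1) * m / N)
      = ((if (N : ℤ) ∣ m then (N : ℝ) else 0) - 1) / 2 := by
  have hMN : (2 * M + 1 : ℝ) = N := by exact_mod_cast hM
  have hN0 : (N : ℝ) ≠ 0 := by rw [← hMN]; positivity
  split_ifs with hm
  · obtain ⟨t, rfl⟩ := hm
    have hterm : ∀ n : ℕ, cos (2 * π * (n + 1) * ((N * t : ℤ) : ℝ) / N) = 1 := by
      intro n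
      refine (congrArg cos ?_).trans (cos_int_mul_two_pi ((n + 1) * t))
      push_cast
      field_simp
    simp only [hterm, sum_const, card_range, nsmul_eq_mul, mul_one]
    linarith
  · have hsin := sin_pi_mul_div_ne_zero (by omega) hm
    have htel := two_mul_sin_mul_sum_cos (π * m / N) M
    rw [hMN, show (N : ℝ) * (π * m / N) = m * π by field_simp, sin_int_mul_pi] at htel
    have hsum : ∑ n ∈ range M, cos (2 * π * (n + 1) * m / N)
        = ∑ n ∈ range M, cos (2 * (n + 1) * (π * m / N)) := by
      refine sum_congr rfl fun n _ => ?_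
      ring_nf
    rw [hsum]
    apply mul_left_cancel₀ hsin
    linear_combination htel / 2

theorem cker_eq_sineKernel {N : ℕ} (hN : Odd N) (k : ℤ) : cker N k = sineKernel N k := by
  obtain ⟨M, rfl⟩ := hN
  rw [cker, sineKernel, show (2 * M + 1 - 1) / 2 = M by omega]
  split_ifs with hk
  · obtain ⟨t, rfl⟩ := hk
    refine (mul_eq_zero_of_right _ (sum_eq_zero fun n _ => ?_)).symm
    refine (congrArg sin ?_).trans (sin_int_mul_pi (2 * (n + 1) * t))
    push_cast
    field_simp
  · set x := π * k / (2 * (2 * M + 1 : ℕ)) with hx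
    have hsin2x : sin (2 * x) ≠ 0 := by
      convert sin_pi_mul_div_ne_zero (Nat.succ_ne_zero _) hk using 2
      rw [hx]
      field_simp
    have hsinx : sin x ≠ 0 := fun h => hsin2x (by rw [sin_two_mul, h]; ring)
    have hcosx : cos x ≠ 0 := fun h => hsin2x (by rw [sin_two_mul, h]; ring)
    have htel := two_mul_sin_mul_sum_sin (2 * x) M
    rw [show (2 * M + 1 : ℝ) * (2 * x) = k * π by rw [hx]; push_cast; field_simp,
      cos_int_mul_pi] at htel
    have hsum : ∑ n ∈ range M, sin (2 * π * (n + 1) * k / (2 * M + 1 : ℕ))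
        = ∑ n ∈ range M, sin (2 * (n + 1) * (2 * x)) := by
      refine sum_congr rfl fun n _ => ?_
      rw [hx]
      ring_nf
    rw [hsum, tan_eq_sin_div_cos]
    rw [sin_two_mul] at htel hsin2x
    generalize ∑ n ∈ range M, sin (2 * (n + 1) * (2 * x)) = S at htel ⊢
    rcases Int.even_or_odd k with he | ho
    · rw [he.neg_one_zpow, cos_two_mul] at *
      field_simp
      linear_combination -htel - 2 * sin_sq_add_cos_sq x
    · rw [ho.neg_one_zpow, cos_two_mul] at *
      field_simp
      linear_combination -htel

theorem sum_sineKernel_mul_sineKernel {N : ℕ} (hN : Odd N) (k l : ℤ) :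
    ∑ j ∈ range N, sineKernel N (j - k) * sineKernel N (j - l)
      = (if (N : ℤ) ∣ l - k then 1 else 0) - 1 / N := by
  set M := (N - 1) / 2
  have hM : 2 * M + 1 = N := by obtain ⟨t, rfl⟩ := hN; omega
  have hN0 : N ≠ 0 := by omega
  have hinner : ∀ n ∈ range M, ∀ n' ∈ range M,
      ∑ j ∈ range N, sin (2 * π * (n + 1) * ((j - k : ℤ) : ℝ) / N)
          * sin (2 * π * (n' + 1) * ((j - l : ℤ) : ℝ) / N)
        = if n = n' then N / 2 * cos (2 * π * (n + 1) * (l - k : ℤ) / N) else 0 := by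
    intro n hn n' hn'
    rw [mem_range] at hn hn'
    have hsum := sum_sin_mul_sin hN0 (n + 1) (n' + 1)
      (-(2 * π * (n + 1) * k / N)) (-(2 * π * (n' + 1) * l / N))
    have hplus : ¬ (N : ℤ) ∣ (n + 1 : ℕ) + (n' + 1 : ℕ) := fun h => by
      have := Int.eq_zero_of_dvd_of_nonneg_of_lt (by positivity) (by push_cast; omega) h
      omega
    have hminus := Int.natCast_dvd_sub_iff_eq (N := N) (a := n' + 1) (b := n + 1)
      (by omega) (by omega)
    push_cast at hsum hplus hminus
    rw [if_neg hplus, sub_zero] at hsum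
    convert hsum using 2
    · push_cast
      ring_nf
    · by_cases h : n = n'
      · subst h
        rw [if_pos rfl, if_pos (hminus.2 rfl)]
        push_cast
        ring_nf
      · rw [if_neg h, if_neg (fun h' => h (hminus.1 h').symm), mul_zero]
  calc ∑ j ∈ range N, sineKernel N (j - k) * sineKernel N (j - l)
      = 4 / N ^ 2 * ∑ n ∈ range M, ∑ n' ∈ range M,
          ∑ j ∈ range N, sin (2 * π * (n + 1) * ((j - k : ℤ) : ℝ) / N)
            * sin (2 * π * (n' + 1) * ((j - l : ℤ) : ℝ) / N) := by
        conv_rhs => enter [2, 2, n]; rw [sum_comm]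
        rw [sum_comm, mul_sum]
        refine sum_congr rfl fun j _ => ?_
        rw [sineKernel, sineKernel, mul_mul_mul_comm, sum_mul_sum, sum_comm]
        ring
    _ = 4 / N ^ 2 * ∑ n ∈ range M, N / 2 * cos (2 * π * (n + 1) * (l - k : ℤ) / N) := by
        rw [sum_congr rfl fun n hn => (sum_congr rfl (hinner n hn)).trans
          (sum_ite_eq (range M) n _)]
        exact congrArg _ (sum_congr rfl fun n hn => if_pos hn)
    _ = _ := by
        rw [← mul_sum, sum_cos_two_pi_mul_succ_div_odd hM]
        have : (N : ℝ) ≠ 0 := Nat.cast_ne_zero.2 hN0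
        split_ifs <;> field_simp <;> ring

theorem cker_neg (N : ℕ) (n : ℤ) : cker N (-n) = -cker N n := by
  simp only [cker, dvd_neg, neg_one_zpow_eq_ite, even_neg, Int.cast_neg, mul_neg, neg_div,
    cos_neg, sin_neg, tan_neg, div_neg]
  split_ifs <;> ring

theorem sum_cker_mul_cker {N : ℕ} (hN : Odd N) (k l : ℤ) :
    ∑ j ∈ range N, cker N (j - k) * cker N (j - l)
      = (if (N : ℤ) ∣ l - k then 1 else 0) - 1 / N := by
  simp only [cker_eq_sineKernel hN, sum_sineKernel_mul_sineKernel hN]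

theorem sum_Hper_mul_eq_neg_sum_mul_Hper (N : ℕ) (u v : ℤ → ℝ) :
    ∑ j ∈ range N, Hper N u j * v j = -∑ j ∈ range N, u j * Hper N v j := by
  simp only [Hper, sum_mul, mul_sum, ← sum_neg_distrib]
  rw [sum_comm]
  refine sum_congr rfl fun k _ => sum_congr rfl fun j _ => ?_
  rw [← neg_sub, cker_neg]
  ring

theorem sum_Hper_sq {N : ℕ} (hN : Odd N) (u : ℤ → ℝ) :
    ∑ j ∈ range N, Hper N u j ^ 2
      = ∑ j ∈ range N, u j ^ 2 - (∑ j ∈ range N, u j) ^ 2 / N := by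
  have hgram : ∀ k ∈ range N, ∀ l ∈ range N,
      ∑ j ∈ range N, cker N (j - k) * cker N (j - l) = (if k = l then 1 else 0) - 1 / N := by
    intro k hk l hl
    simp only [sum_cker_mul_cker hN, Int.natCast_dvd_sub_iff_eq (mem_range.1 hk) (mem_range.1 hl)]
  calc ∑ j ∈ range N, Hper N u j ^ 2
      = ∑ k ∈ range N, ∑ l ∈ range N,
          u k * u l * ∑ j ∈ range N, cker N (j - k) * cker N (j - l) := by
        simp only [Hper, sq, sum_mul_sum]
        simp only [mul_sum]
        rw [sum_comm]
        refine sum_congr rfl fun k _ => ?_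
        rw [sum_comm]
        exact sum_congr rfl fun l _ => sum_congr rfl fun j _ => by ring
    _ = ∑ k ∈ range N, ∑ l ∈ range N, ((if k = l then u k * u l else 0) - u k * u l / N) := by
        refine sum_congr rfl fun k hk => sum_congr rfl fun l hl => ?_
        rw [hgram k hk l hl]
        split_ifs <;> ring
    _ = _ := by
        simp only [sum_sub_distrib, sum_ite_eq, mem_range, ← sum_div, sq, sum_mul_sum]
        exact congrArg₂ _ (sum_congr rfl fun k hk => by rw [if_pos (mem_range.1 hk)]) rfl

theorem stmt_17_general (N : ℕ) (hN : Odd N)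
    (u v : ℤ → ℝ) :
    ((∑ j ∈ Finset.range N, Hper N u j * v j)
        = -∑ j ∈ Finset.range N, u j * Hper N v j)
    ∧ Real.sqrt (∑ j ∈ Finset.range N, (Hper N u j) ^ 2)
        ≤ Real.sqrt (∑ j ∈ Finset.range N, (u j) ^ 2)
    ∧ ((∑ j ∈ Finset.range N, u j) = 0 →
        Real.sqrt (∑ j ∈ Finset.range N, (Hper N u j) ^ 2)
          = Real.sqrt (∑ j ∈ Finset.range N, (u j) ^ 2)) := by
  refine ⟨sum_Hper_mul_eq_neg_sum_mul_Hper N u v, ?_, fun hmean => ?_⟩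
  · rw [sum_Hper_sq hN]
    exact sqrt_le_sqrt (sub_le_self _ (by positivity))
  · rw [sum_Hper_sq hN, hmean]
    simp

theorem stmt_17 (N : ℕ) (hN : Odd N) (hN3 : 3 ≤ N)
    (u v : ℤ → ℝ) (hu : ∀ j : ℤ, u (j + N) = u j) (hv : ∀ j : ℤ, v (j + N) = v j) :
    ((∑ j ∈ Finset.range N, Hper N u j * v j)
        = -∑ j ∈ Finset.range N, u j * Hper N v j)
    ∧ Real.sqrt (∑ j ∈ Finset.range N, (Hper N u j) ^ 2)
        ≤ Real.sqrt (∑ j ∈ Finset.range N, (u j) ^ 2)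
    ∧ ((∑ j ∈ Finset.range N, u j) = 0 →
        Real.sqrt (∑ j ∈ Finset.range N, (Hper N u j) ^ 2)
          = Real.sqrt (∑ j ∈ Finset.range N, (u j) ^ 2)) :=
  stmt_17_general N hN u v
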